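/- arXiv:2411.10296 — 3 statements merged into one kernel-verified Lean document; each statement's English description precedes it below -/
import Mathlib

section
/- Let G(s) = E[s^X] be the pgf of X satisfying X =ᵈ P + ∑_{i=1}^N (X_i-1)⁺ with P ~ Po(α), N ~ Bin(2,1/2), and let p = P(X=0). Then for s ∈ (0,1], a(s)·G(s)² + 2(a(s)b(s) - 2s²)·G(s) + a(s)·b(s)² = 0, where a(s) = e^{α(s-1)} and b(s) = s(1+p) - p. -/
open MeasureTheory ProbabilityTheory Real
open scoped ENNReal

set_option maxHeartbeats 1000000

lemma lint_pow {Ω : Type*} [MeasureSpace Ω] (W : Ω → ℕ) (hW : Measurable W) (σ : ℝ≥0∞) :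
    ∫⁻ ω, σ ^ W ω ∂(ℙ : Measure Ω) = ∑' k, σ ^ k * ℙ {ω | W ω = k} := by
  have h1 : ∫⁻ ω, σ ^ W ω ∂(ℙ : Measure Ω) = ∫⁻ n, σ ^ n ∂((ℙ : Measure Ω).map W) :=
    (lintegral_map measurable_from_top hW).symm
  rw [h1, lintegral_countable']
  refine tsum_congr fun k => ?_
  rw [Measure.map_apply hW (measurableSet_singleton k)]
  rfl

lemma tsum_total {Ω : Type*} [MeasureSpace Ω] [IsProbabilityMeasure (ℙ : Measure Ω)]
    (W : Ω → ℕ) (hW : Measurable W) :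
    ∑' k, ℙ {ω | W ω = k} = 1 := by
  have h := (lint_pow W hW 1).symm
  simpa using h

lemma helper3 (f g h : ℕ → ℝ≥0∞) (c : ℝ≥0∞) :
    (∑' p, ∑' x, ∑' y, c * f p * g x * h y)
      = c * (∑' p, f p) * (∑' x, g x) * (∑' y, h y) := by
  simp only [ENNReal.tsum_mul_left, ENNReal.tsum_mul_right]

lemma poisson_tsum (α s : ℝ) (hα : 0 < α) (hs : 0 ≤ s) :
    ∑' k : ℕ, (ENNReal.ofReal s) ^ k
        * ENNReal.ofReal (Real.exp (-α) * α ^ k / (Nat.factorial k : ℝ))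
      = ENNReal.ofReal (Real.exp (α * (s - 1))) := by
  have h1 : ∀ k : ℕ, (ENNReal.ofReal s) ^ k
      * ENNReal.ofReal (Real.exp (-α) * α ^ k / (Nat.factorial k : ℝ))
      = ENNReal.ofReal (Real.exp (-α) * ((s * α) ^ k / (Nat.factorial k : ℝ))) := by
    intro k
    rw [← ENNReal.ofReal_pow hs, ← ENNReal.ofReal_mul (pow_nonneg hs k)]
    congr 1
    field_simp
    ring
  have hnn : ∀ k : ℕ, 0 ≤ Real.exp (-α) * ((s * α) ^ k / (Nat.factorial k : ℝ)) := by
    intro k; positivity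
  have hsum : Summable fun k : ℕ => Real.exp (-α) * ((s * α) ^ k / (Nat.factorial k : ℝ)) :=
    (Real.summable_pow_div_factorial (s * α)).mul_left _
  rw [tsum_congr h1, ← ENNReal.ofReal_tsum_of_nonneg hnn hsum]
  congr 1
  rw [tsum_mul_left]
  have h2 : ∑' k : ℕ, (s * α) ^ k / (Nat.factorial k : ℝ) = Real.exp (s * α) := by
    rw [Real.exp_eq_exp_ℝ, NormedSpace.exp_eq_tsum_div]
  rw [h2, ← Real.exp_add]
  ring_nf

/-- The probability generating function `G(s) = E[s^X]` of a solution `X` of the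
recursive distributional equation `X =ᵈ P + ∑_{i=1}^N (Xᵢ - 1)⁺`, with `P ~ Po(α)` and
`N ~ Bin(2,1/2)`, satisfies the quadratic equation
`a(s) G(s)² + 2(a(s)b(s) - 2s²) G(s) + a(s) b(s)² = 0` for `s ∈ (0,1]`,
where `a(s) = e^{α(s-1)}`, `b(s) = s(1+p) - p` and `p = P(X = 0)`. -/
theorem pgf_quadratic_equation {Ω : Type*} [MeasureSpace Ω]
    [IsProbabilityMeasure (ℙ : Measure Ω)] (α : ℝ) (hα : 0 < α)
    (X P N X₁ X₂ : Ω → ℕ)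
    (hXm : Measurable X) (hPm : Measurable P) (hNm : Measurable N)
    (hX₁m : Measurable X₁) (hX₂m : Measurable X₂)
    (hindep : iIndepFun ![P, N, X₁, X₂] ℙ)
    (hP : ∀ k : ℕ, ℙ {ω | P ω = k}
      = ENNReal.ofReal (Real.exp (-α) * α ^ k / (Nat.factorial k : ℝ)))
    (hN0 : ℙ {ω | N ω = 0} = 1/4) (hN1 : ℙ {ω | N ω = 1} = 1/2)
    (hN2 : ℙ {ω | N ω = 2} = 1/4)
    (hX₁ : ∀ k, ℙ {ω | X₁ ω = k} = ℙ {ω | X ω = k})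
    (hX₂ : ∀ k, ℙ {ω | X₂ ω = k} = ℙ {ω | X ω = k})
    (hRDE : ∀ k, ℙ {ω | X ω = k}
      = ℙ {ω | P ω + (if 1 ≤ N ω then X₁ ω - 1 else 0)
          + (if 2 ≤ N ω then X₂ ω - 1 else 0) = k})
    (p : ℝ) (hp : p = (ℙ {ω | X ω = 0}).toReal)
    (G a b : ℝ → ℝ)
    (hG : ∀ s, G s = ∫ ω, s ^ (X ω) ∂ℙ)
    (ha : ∀ s, a s = Real.exp (α*(s-1)))
    (hb : ∀ s, b s = s*(1+p) - p) :
    ∀ s : ℝ, 0 < s → s ≤ 1 →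
      a s * (G s)^2 + 2*(a s * b s - 2*s^2) * (G s) + a s * (b s)^2 = 0 := by
  intro s hs hs1
  set σ : ℝ≥0∞ := ENNReal.ofReal s with hσdef
  have hσ1 : σ ≤ 1 := ENNReal.ofReal_le_one.mpr hs1
  have hσtop : σ ≠ ⊤ := ENNReal.ofReal_ne_top
  -- real integral = toReal of lintegral
  have hGlint : G s = (∫⁻ ω, σ ^ X ω ∂ℙ).toReal := by
    rw [hG s, integral_eq_lintegral_of_nonneg_ae
      (ae_of_all _ fun ω => pow_nonneg hs.le _)
      ((measurable_from_top.comp hXm :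
        Measurable fun ω => s ^ X ω).aestronglyMeasurable)]
    congr 1
    refine lintegral_congr fun ω => ?_
    rw [ENNReal.ofReal_pow hs.le]
  -- Z, the RHS of the RDE
  set Z : Ω → ℕ := fun ω => P ω + (if 1 ≤ N ω then X₁ ω - 1 else 0)
      + (if 2 ≤ N ω then X₂ ω - 1 else 0) with hZdef
  have hZm : Measurable Z := by
    refine Measurable.add (Measurable.add hPm ?_) ?_
    · exact Measurable.ite (hNm (measurableSet_Ici (a := 1)))
        ((measurable_of_countable (fun n : ℕ => n - 1)).comp hX₁m) measurable_const
    · exact Measurable.ite (hNm (measurableSet_Ici (a := 2)))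
        ((measurable_of_countable (fun n : ℕ => n - 1)).comp hX₂m) measurable_const
  have hXZ : ∫⁻ ω, σ ^ X ω ∂ℙ = ∫⁻ ω, σ ^ Z ω ∂ℙ := by
    rw [lint_pow X hXm σ, lint_pow Z hZm σ]
    exact tsum_congr fun k => by rw [hRDE k]
  -- quadruple map
  set T : Ω → ℕ × ℕ × ℕ × ℕ := fun ω => (N ω, P ω, X₁ ω, X₂ ω) with hTdef
  have hTm : Measurable T := hNm.prodMk (hPm.prodMk (hX₁m.prodMk hX₂m))
  have hmapT : ∀ n kp k1 k2 : ℕ, (ℙ : Measure Ω).map T {(n, kp, k1, k2)}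
      = ℙ {ω | N ω = n} * (ℙ {ω | P ω = kp}
          * (ℙ {ω | X ω = k1} * ℙ {ω | X ω = k2})) := by
    intro n kp k1 k2
    rw [Measure.map_apply hTm (measurableSet_singleton _)]
    have hset : T ⁻¹' {(n, kp, k1, k2)}
        = ⋂ i, (![P, N, X₁, X₂] i) ⁻¹' {(![kp, n, k1, k2] : Fin 4 → ℕ) i} := by
      ext ω
      simp only [Set.mem_preimage, Set.mem_singleton_iff, Set.mem_iInter, Prod.mk.injEq,
        Fin.forall_fin_succ, Matrix.cons_val_zero, Matrix.cons_val_one, Matrix.head_cons,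
        Matrix.cons_val_succ, Matrix.cons_val_two, Matrix.cons_val_three, Matrix.tail_cons,
        Matrix.vecHead, Matrix.vecTail, IsEmpty.forall_iff, and_true, hTdef]
      tauto
    rw [hset, hindep.meas_iInter
      (fun i => ⟨{(![kp, n, k1, k2] : Fin 4 → ℕ) i}, measurableSet_singleton _, rfl⟩),
      Fin.prod_univ_four]
    show ℙ {ω | P ω = kp} * ℙ {ω | N ω = n} * ℙ {ω | X₁ ω = k1} * ℙ {ω | X₂ ω = k2} = _
    rw [hX₁ k1, hX₂ k2]
    ring
  -- the quadruple sum
  set F : ℕ → ℝ≥0∞ := fun n => ∑' kp, ∑' k1, ∑' k2,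
      σ ^ (kp + (if 1 ≤ n then k1 - 1 else 0) + (if 2 ≤ n then k2 - 1 else 0))
        * (ℙ {ω | N ω = n} * (ℙ {ω | P ω = kp}
            * (ℙ {ω | X ω = k1} * ℙ {ω | X ω = k2}))) with hFdef
  have hsum4 : ∫⁻ ω, σ ^ X ω ∂ℙ = ∑' n, F n := by
    have hzt : ∫⁻ ω, σ ^ Z ω ∂ℙ
        = ∫⁻ q : ℕ × ℕ × ℕ × ℕ, σ ^ (q.2.1 + (if 1 ≤ q.1 then q.2.2.1 - 1 else 0)
            + (if 2 ≤ q.1 then q.2.2.2 - 1 else 0)) ∂((ℙ : Measure Ω).map T) := by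
      rw [lintegral_map (measurable_of_countable _) hTm]
    rw [hXZ, hzt, lintegral_countable', ENNReal.tsum_prod']
    refine tsum_congr fun n => ?_
    rw [ENNReal.tsum_prod']
    refine tsum_congr fun kp => ?_
    rw [ENNReal.tsum_prod']
    refine tsum_congr fun k1 => tsum_congr fun k2 => ?_
    rw [hmapT n kp k1 k2]
  -- N is supported on {0,1,2}
  have hNtot : ∑' n, ℙ {ω | N ω = n} = 1 := tsum_total N hNm
  have h3sum : ∑ k ∈ Finset.range 3, ℙ {ω | N ω = k} = 1 := by
    rw [Finset.sum_range_succ, Finset.sum_range_succ, Finset.sum_range_one, hN0, hN1, hN2]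
    have h : ((1:ℝ≥0∞)/4 + 1/2 + 1/4) = ENNReal.ofReal (1/4 + 1/2 + 1/4) := by
      rw [ENNReal.ofReal_add (by norm_num) (by norm_num),
        ENNReal.ofReal_add (by norm_num) (by norm_num)]
      norm_num [ENNReal.ofReal_div_of_pos, ENNReal.ofReal_one, ENNReal.ofReal_ofNat]
    rw [h]
    norm_num
  have hNbig : ∀ n, n ∉ Finset.range 3 → ℙ {ω | N ω = n} = 0 := by
    intro n hn
    have hle := ENNReal.sum_le_tsum (f := fun k => ℙ {ω | N ω = k})
      (insert n (Finset.range 3))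
    rw [Finset.sum_insert hn, h3sum, hNtot] at hle
    have h0 : ℙ {ω | N ω = n} + 1 ≤ 0 + 1 := by simpa using hle
    exact le_antisymm (WithTop.le_of_add_le_add_right ENNReal.one_ne_top h0) (zero_le)
  have hcut : ∑' n, F n = F 0 + F 1 + F 2 := by
    rw [tsum_eq_sum (s := Finset.range 3) (fun n hn => by simp [hFdef, hNbig n hn])]
    rw [Finset.sum_range_succ, Finset.sum_range_succ, Finset.sum_range_one]
  -- the three values
  have hM : ∑' k, ℙ {ω | X ω = k} = 1 := tsum_total X hXm
  have hA : ∑' k, σ ^ k * ℙ {ω | P ω = k} = ENNReal.ofReal (Real.exp (α * (s - 1))) := by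
    simp_rw [hP]
    exact poisson_tsum α s hα hs.le
  have hF0 : F 0 = ℙ {ω | N ω = 0} * (∑' k, σ ^ k * ℙ {ω | P ω = k}) * 1 * 1 := by
    simp only [hFdef]
    have : (∑' kp, ∑' k1, ∑' k2,
        σ ^ (kp + (if 1 ≤ (0:ℕ) then k1 - 1 else 0) + (if 2 ≤ (0:ℕ) then k2 - 1 else 0))
          * (ℙ {ω | N ω = 0} * (ℙ {ω | P ω = kp}
              * (ℙ {ω | X ω = k1} * ℙ {ω | X ω = k2}))))
        = ∑' kp, ∑' k1, ∑' k2, ℙ {ω | N ω = 0} * (σ ^ kp * ℙ {ω | P ω = kp})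
            * ℙ {ω | X ω = k1} * ℙ {ω | X ω = k2} := by
      refine tsum_congr fun kp => tsum_congr fun k1 => tsum_congr fun k2 => ?_
      norm_num
      ring
    rw [this, helper3, hM]
  have hF1 : F 1 = ℙ {ω | N ω = 1} * (∑' k, σ ^ k * ℙ {ω | P ω = k})
      * (∑' k, σ ^ (k - 1) * ℙ {ω | X ω = k}) * 1 := by
    simp only [hFdef]
    have : (∑' kp, ∑' k1, ∑' k2,
        σ ^ (kp + (if 1 ≤ (1:ℕ) then k1 - 1 else 0) + (if 2 ≤ (1:ℕ) then k2 - 1 else 0))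
          * (ℙ {ω | N ω = 1} * (ℙ {ω | P ω = kp}
              * (ℙ {ω | X ω = k1} * ℙ {ω | X ω = k2}))))
        = ∑' kp, ∑' k1, ∑' k2, ℙ {ω | N ω = 1} * (σ ^ kp * ℙ {ω | P ω = kp})
            * (σ ^ (k1 - 1) * ℙ {ω | X ω = k1}) * ℙ {ω | X ω = k2} := by
      refine tsum_congr fun kp => tsum_congr fun k1 => tsum_congr fun k2 => ?_
      norm_num [pow_add]
      ring
    rw [this, helper3, hM]
  have hF2 : F 2 = ℙ {ω | N ω = 2} * (∑' k, σ ^ k * ℙ {ω | P ω = k})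
      * (∑' k, σ ^ (k - 1) * ℙ {ω | X ω = k})
      * (∑' k, σ ^ (k - 1) * ℙ {ω | X ω = k}) := by
    simp only [hFdef]
    have : (∑' kp, ∑' k1, ∑' k2,
        σ ^ (kp + (if 1 ≤ (2:ℕ) then k1 - 1 else 0) + (if 2 ≤ (2:ℕ) then k2 - 1 else 0))
          * (ℙ {ω | N ω = 2} * (ℙ {ω | P ω = kp}
              * (ℙ {ω | X ω = k1} * ℙ {ω | X ω = k2}))))
        = ∑' kp, ∑' k1, ∑' k2, ℙ {ω | N ω = 2} * (σ ^ kp * ℙ {ω | P ω = kp})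
            * (σ ^ (k1 - 1) * ℙ {ω | X ω = k1}) * (σ ^ (k2 - 1) * ℙ {ω | X ω = k2}) := by
      refine tsum_congr fun kp => tsum_congr fun k1 => tsum_congr fun k2 => ?_
      norm_num [pow_add]
      ring
    rw [this, helper3]
  -- abbreviations
  set AE : ℝ≥0∞ := ENNReal.ofReal (Real.exp (α * (s - 1))) with hAEdef
  set HE : ℝ≥0∞ := ∑' k, σ ^ (k - 1) * ℙ {ω | X ω = k} with hHEdef
  have hGE : ∫⁻ ω, σ ^ X ω ∂ℙ = 1/4 * AE + 1/2 * (AE * HE) + 1/4 * (AE * HE * HE) := by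
    rw [hsum4, hcut, hF0, hF1, hF2, hA, hN0, hN1, hN2]
    ring
  -- relation between HE and the pgf
  have hHrel : σ * HE + ℙ {ω | X ω = 0}
      = σ * ℙ {ω | X ω = 0} + ∫⁻ ω, σ ^ X ω ∂ℙ := by
    have hHE : HE = ℙ {ω | X ω = 0} + ∑' k, σ ^ k * ℙ {ω | X ω = k + 1} := by
      rw [hHEdef, tsum_eq_zero_add' ENNReal.summable]
      simp
    have hGEs : ∫⁻ ω, σ ^ X ω ∂ℙ
        = ℙ {ω | X ω = 0} + ∑' k, σ ^ (k + 1) * ℙ {ω | X ω = k + 1} := by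
      rw [lint_pow X hXm σ, tsum_eq_zero_add' ENNReal.summable]
      simp
    have hmul : σ * ∑' k, σ ^ k * ℙ {ω | X ω = k + 1}
        = ∑' k, σ ^ (k + 1) * ℙ {ω | X ω = k + 1} := by
      rw [← ENNReal.tsum_mul_left]
      exact tsum_congr fun k => by rw [← mul_assoc, ← pow_succ']
    rw [hHE, hGEs, mul_add, hmul]
    ring
  -- finiteness
  have hXfin : ∀ k, ℙ {ω | X ω = k} ≠ ⊤ := fun k => measure_ne_top ℙ _
  have hHEle : HE ≤ 1 := by
    rw [hHEdef]
    calc ∑' k, σ ^ (k - 1) * ℙ {ω | X ω = k}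
        ≤ ∑' k, 1 * ℙ {ω | X ω = k} := by
          exact ENNReal.tsum_le_tsum fun k => mul_le_mul_left (pow_le_one' hσ1 _) _
      _ = 1 := by simpa using hM
  have hHEfin : HE ≠ ⊤ := (lt_of_le_of_lt hHEle ENNReal.one_lt_top).ne
  have hAEfin : AE ≠ ⊤ := ENNReal.ofReal_ne_top
  have hGEfin : ∫⁻ ω, σ ^ X ω ∂ℙ ≠ ⊤ := by
    rw [hGE]
    exact ENNReal.add_ne_top.mpr ⟨ENNReal.add_ne_top.mpr
      ⟨ENNReal.mul_ne_top (by norm_num) hAEfin,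
       ENNReal.mul_ne_top (by norm_num) (ENNReal.mul_ne_top hAEfin hHEfin)⟩,
      ENNReal.mul_ne_top (by norm_num) (ENNReal.mul_ne_top (ENNReal.mul_ne_top hAEfin hHEfin) hHEfin)⟩
  -- pass to real numbers
  set hE : ℝ := HE.toReal with hhEdef
  have htoA : AE.toReal = a s := by
    rw [hAEdef, ENNReal.toReal_ofReal (Real.exp_pos _).le, ha s]
  have eq2 : G s = 1/4 * a s + 1/2 * (a s * hE) + 1/4 * (a s * hE * hE) := by
    rw [hGlint, hGE]
    rw [ENNReal.toReal_add (ENNReal.add_ne_top.mpr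
        ⟨ENNReal.mul_ne_top (by norm_num) hAEfin,
         ENNReal.mul_ne_top (by norm_num) (ENNReal.mul_ne_top hAEfin hHEfin)⟩)
      (ENNReal.mul_ne_top (by norm_num) (ENNReal.mul_ne_top (ENNReal.mul_ne_top hAEfin hHEfin) hHEfin)),
      ENNReal.toReal_add (ENNReal.mul_ne_top (by norm_num) hAEfin)
        (ENNReal.mul_ne_top (by norm_num) (ENNReal.mul_ne_top hAEfin hHEfin))]
    simp only [ENNReal.toReal_mul, htoA]
    norm_num
    rfl
  have eq1 : s * hE + p = s * p + G s := by
    have := congrArg ENNReal.toReal hHrel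
    rw [ENNReal.toReal_add (ENNReal.mul_ne_top hσtop hHEfin) (hXfin 0),
      ENNReal.toReal_add (ENNReal.mul_ne_top hσtop (hXfin 0)) hGEfin,
      ENNReal.toReal_mul, ENNReal.toReal_mul] at this
    rw [hσdef, ENNReal.toReal_ofReal hs.le] at this
    rw [hp, hGlint]
    exact this
  -- final algebra
  have hkey : 4 * s^2 * G s = a s * (G s + b s)^2 := by
    have h1 : G s + b s = s + s * hE := by
      rw [hb s]; nlinarith [eq1]
    rw [h1, eq2]
    ring
  linear_combination -hkey
end

section
/- For 0 < α ≤ 2 - √2 and p = 1 - α, the function g(s) = s² - e^{α(s-1)}(s(2-α) + α - 1) satisfies g(s) > 0 for all s ∈ [0,1) and g(1) = 0. -/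
/-!
Put `t = 1 - s`. Dividing by `e^{α(s-1)} > 0`, the claim becomes
`1 - (2 - α) t < (1 - t)² e^{α t}`. Bounding `e^{α t} ≥ 1 + α t + (α t)² / 2`, the difference of
the two sides is at least `t² ((α² - 4α + 2) / 2 + α (1 - α) t + α² t² / 2)`, and every term of
the bracket is nonnegative, the last one positive: `α ≤ 2 - √2` places `α` below the smaller root
of `α² - 4α + 2` and below `1`.
-/

open Real

lemma sq_sub_four_mul_add_two_nonneg {α : ℝ} (hα : α ≤ 2 - √2) : 0 ≤ α ^ 2 - 4 * α + 2 := by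
  have hsqrt : √2 ≤ 2 - α := by linarith
  nlinarith [sq_sqrt (zero_le_two : (0 : ℝ) ≤ 2), sqrt_nonneg 2]

lemma le_one_of_le_two_sub_sqrt_two {α : ℝ} (hα : α ≤ 2 - √2) : α ≤ 1 := by
  have : 1 ≤ √2 := one_le_sqrt.mpr one_le_two
  linarith

lemma one_sub_mul_lt_sq_mul_quadratic {α t : ℝ} (hα0 : 0 < α) (hα1 : α ≤ 1)
    (hdisc : 0 ≤ α ^ 2 - 4 * α + 2) (ht : 0 < t) :
    1 - (2 - α) * t < (1 - t) ^ 2 * (1 + α * t + (α * t) ^ 2 / 2) := by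
  have hbracket : 0 < (α ^ 2 - 4 * α + 2) / 2 + α * (1 - α) * t + α ^ 2 * t ^ 2 / 2 := by
    have : 0 ≤ α * (1 - α) * t := by
      have : 0 ≤ 1 - α := by linarith
      positivity
    have : 0 < α ^ 2 * t ^ 2 / 2 := by positivity
    linarith
  have hexpand : (1 - t) ^ 2 * (1 + α * t + (α * t) ^ 2 / 2) - (1 - (2 - α) * t)
      = t ^ 2 * ((α ^ 2 - 4 * α + 2) / 2 + α * (1 - α) * t + α ^ 2 * t ^ 2 / 2) := by
    ring
  linarith [mul_pos (pow_pos ht 2) hbracket]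

lemma one_sub_mul_lt_sq_mul_exp {α t : ℝ} (hα0 : 0 < α) (hα : α ≤ 2 - √2) (ht : 0 < t) :
    1 - (2 - α) * t < (1 - t) ^ 2 * exp (α * t) :=
  calc 1 - (2 - α) * t
      < (1 - t) ^ 2 * (1 + α * t + (α * t) ^ 2 / 2) :=
        one_sub_mul_lt_sq_mul_quadratic hα0 (le_one_of_le_two_sub_sqrt_two hα)
          (sq_sub_four_mul_add_two_nonneg hα) ht
    _ ≤ (1 - t) ^ 2 * exp (α * t) :=
        mul_le_mul_of_nonneg_left (quadratic_le_exp_of_nonneg (by positivity)) (sq_nonneg _)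

theorem g_pos_small_alpha (α : ℝ) (hα0 : 0 < α) (hα : α ≤ 2 - Real.sqrt 2) :
    (∀ s ∈ Set.Ico (0:ℝ) 1, 0 < s^2 - Real.exp (α*(s-1)) * (s*(2-α) + α - 1)) ∧
    (1:ℝ)^2 - Real.exp (α*(1-1)) * (1*(2-α) + α - 1) = 0 := by
  refine ⟨fun s hs => ?_, by norm_num⟩
  have hkey := one_sub_mul_lt_sq_mul_exp hα0 hα (sub_pos.mpr hs.2)
  rw [sub_sub_cancel] at hkey
  have hfactor : s ^ 2 - exp (α * (s - 1)) * (s * (2 - α) + α - 1)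
      = exp (α * (s - 1)) * (s ^ 2 * exp (α * (1 - s)) - (1 - (2 - α) * (1 - s))) := by
    have hinv : exp (α * (s - 1)) * exp (α * (1 - s)) = 1 := by
      rw [← exp_add, ← exp_zero]
      ring_nf
    linear_combination (-s ^ 2) * hinv
  rw [hfactor]
  exact mul_pos (exp_pos _) (sub_pos.mpr hkey)
end

section
/- For 0 < α ≤ 2 - √2 and p = 1 - α, the function g(s) = s² - e^{α(s-1)}(s(2-α) + α - 1) satisfies g'(s) < 0 for all s ∈ [0,1) when α < 2 - √2. -/
open Real

theorem g_deriv_neg (α : ℝ) (hα0 : 0 < α) (hα : α < 2 - Real.sqrt 2) :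
    ∀ s ∈ Set.Ico (0:ℝ) 1,
      deriv (fun s : ℝ => s^2 - Real.exp (α*(s-1)) * (s*(2-α) + α - 1)) s < 0 := by
  intro s hs
  obtain ⟨hs0, hs1⟩ := hs
  have hd : HasDerivAt (fun s : ℝ => s^2 - Real.exp (α*(s-1)) * (s*(2-α) + α - 1))
      (2*s - (α * Real.exp (α*(s-1)) * (s*(2-α)+α-1) + Real.exp (α*(s-1)) * (2-α))) s := by
    have h1 : HasDerivAt (fun s : ℝ => s^2) (2*s) s := by
      simpa using (hasDerivAt_pow 2 s)
    have h2 : HasDerivAt (fun s : ℝ => α*(s-1)) α s := by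
      simpa using ((hasDerivAt_id s).sub_const 1).const_mul α
    have h3 : HasDerivAt (fun s : ℝ => Real.exp (α*(s-1))) (α * Real.exp (α*(s-1))) s := by
      simpa [mul_comm, Function.comp_def] using (Real.hasDerivAt_exp (α*(s-1))).comp s h2
    have h4 : HasDerivAt (fun s : ℝ => s*(2-α) + α - 1) (2-α) s := by
      simpa using (((hasDerivAt_id s).mul_const (2-α)).add_const α).sub_const 1
    exact h1.sub (h3.mul h4)
  rw [hd.deriv]
  -- bounds on α
  have hsqrt2 : (1:ℝ) < Real.sqrt 2 := by
    nlinarith [Real.sq_sqrt (by norm_num : (0:ℝ) ≤ 2), Real.sqrt_nonneg 2]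
  have hα1 : α < 1 := by nlinarith
  have hq : α^2 - 4*α + 2 > 0 := by
    have h2a : Real.sqrt 2 < 2 - α := by linarith
    have := Real.sq_sqrt (by norm_num : (0:ℝ) ≤ 2)
    nlinarith [Real.sqrt_nonneg 2]
  set x := α*(s-1) with hx
  have hxneg : x < 0 := by
    have : s - 1 < 0 := by linarith
    exact mul_neg_of_pos_of_neg hα0 this
  have hexp : 1 + x < Real.exp x := by
    have := Real.add_one_lt_exp (ne_of_lt hxneg)
    linarith
  have hB : 0 < α*(s*(2-α)+α-1) + (2-α) := by nlinarith
  have key : (1+x) * (α*(s*(2-α)+α-1) + (2-α)) < Real.exp x * (α*(s*(2-α)+α-1) + (2-α)) :=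
    mul_lt_mul_of_pos_right hexp hB
  have hpoly : 2*s - (1+x) * (α*(s*(2-α)+α-1) + (2-α)) ≤ 0 := by
    rw [hx]
    nlinarith [mul_pos (by linarith : (0:ℝ) < 1-s) hq,
      mul_nonneg (mul_nonneg (mul_nonneg hα0.le hα0.le) (by linarith : (0:ℝ) ≤ 2-α))
        (sq_nonneg (1-s))]
  nlinarith [key]
end
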